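/- The skeptical aggregation operator is strategy proof when individuals have IUO Hamming sets based preferences. Precisely: let AF = ⟨𝒜, ⇀⟩ be an argumentation framework, let agents 1,…,n each have the IUO Hamming sets based preference ⪰_{i,⊖ᴹ} with most preferred labeling the complete labeling ℒᵢ, let P = (ℒ₁,…,ℒₙ) be the sincere profile, let k be an agent and ℒ'ₖ any labeling, and let P' be P with ℒₖ replaced by ℒ'ₖ; suppose so(P) and so(P') exist. Then it is not the case that so(P') ≻_{k,⊖ᴹ} so(P); hence no agent has a strategic lie. -/
import Mathlib


/- Labels for arguments: in, out, undec -/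
inductive Lab where
  | IN : Lab
  | OUT : Lab
  | UNDEC : Lab
deriving DecidableEq

variable {A : Type}

/-- Arguments labeled `in` by a labeling. -/
def labIn (L : A → Lab) : Set A := {a | L a = Lab.IN}
/-- Arguments labeled `out` by a labeling. -/
def labOut (L : A → Lab) : Set A := {a | L a = Lab.OUT}
/-- Arguments labeled `undec` by a labeling. -/
def labUndec (L : A → Lab) : Set A := {a | L a = Lab.UNDEC}
/-- Decided arguments: labeled `in` or `out`. -/
def labDec (L : A → Lab) : Set A := labIn L ∪ labOut L

/-- Admissible labeling with respect to a defeat relation `df` (`df b a` : b defeats a). -/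
def Admissible (df : A → A → Prop) (L : A → Lab) : Prop :=
  ∀ a : A,
    (L a = Lab.IN → ∀ b : A, df b a → L b = Lab.OUT) ∧
    (L a = Lab.OUT → ∃ b : A, df b a ∧ L b = Lab.IN)

/-- Complete labeling. -/
def Complete (df : A → A → Prop) (L : A → Lab) : Prop :=
  Admissible df L ∧
  ∀ a : A, L a = Lab.UNDEC →
    ¬ (∀ b : A, df b a → L b = Lab.OUT) ∧ ¬ (∃ b : A, df b a ∧ L b = Lab.IN)

/-- `L1 ⊑ L2` : less or equally committed. -/
def LabLeq (L1 L2 : A → Lab) : Prop := labIn L1 ⊆ labIn L2 ∧ labOut L1 ⊆ labOut L2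

/-- `L1 ≈ L2` : compatible labelings. -/
def LabCompatible (L1 L2 : A → Lab) : Prop :=
  labIn L1 ∩ labOut L2 = ∅ ∧ labOut L1 ∩ labIn L2 = ∅

/-- Hamming set `L1 ⊖ L2`. -/
def hamSet (L1 L2 : A → Lab) : Set A := {a | L1 a ≠ L2 a}
/-- Hamming distance `L1 |⊖| L2`. -/
noncomputable def hamDist (L1 L2 : A → Lab) : ℕ := (hamSet L1 L2).ncard

/-- in–out Hamming set `L1 ⊖ⁱᵒ L2`. -/
def ioSet (L1 L2 : A → Lab) : Set A :=
  {a | (L1 a = Lab.IN ∧ L2 a = Lab.OUT) ∨ (L1 a = Lab.OUT ∧ L2 a = Lab.IN)}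
/-- dec–undec Hamming set `L1 ⊖ᵈᵘ L2`. -/
def duSet (L1 L2 : A → Lab) : Set A :=
  {a | (a ∈ labDec L1 ∧ L2 a = Lab.UNDEC) ∨ (L1 a = Lab.UNDEC ∧ a ∈ labDec L2)}
/-- IUO Hamming sets `L1 ⊖ᴹ L2` as a pair. -/
def iuoSets (L1 L2 : A → Lab) : Set A × Set A := (ioSet L1 L2, duSet L1 L2)
/-- Componentwise inclusion on pairs of sets. -/
def PairSub {α : Type} (p q : Set α × Set α) : Prop := p.1 ⊆ q.1 ∧ p.2 ⊆ q.2
/-- IUO Hamming distance `L1 |⊖ᴹ| L2`. -/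
noncomputable def iuoDist (L1 L2 : A → Lab) : ℕ :=
  2 * (ioSet L1 L2).ncard + (duSet L1 L2).ncard

/-- Two arguments are in-sync (with respect to the complete labelings of the framework). -/
def InSync (df : A → A → Prop) (a b : A) : Prop :=
  (∀ L : A → Lab, Complete df L → L a = L b) ∨
  (∀ L : A → Lab, Complete df L →
    (L a = Lab.IN ↔ L b = Lab.OUT) ∧ (L a = Lab.OUT ↔ L b = Lab.IN))

/-- An issue: an equivalence class of the in-sync relation. -/
def IsIssue (df : A → A → Prop) (B : Set A) : Prop :=
  ∃ a : A, B = {b | InSync df a b}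

/-- Issue-wise set `L1 ⊖_W L2`. -/
def iwSet (df : A → A → Prop) (L1 L2 : A → Lab) : Set (Set A) :=
  {B | IsIssue df B ∧ ∃ a ∈ B, L1 a ≠ L2 a}
/-- Issue-wise distance `L1 |⊖_W| L2`. -/
noncomputable def iwDist (df : A → A → Prop) (L1 L2 : A → Lab) : ℕ := (iwSet df L1 L2).ncard

/-- in–out Issue-wise set `L1 ⊖_Wⁱᵒ L2`. -/
def iwIoSet (df : A → A → Prop) (L1 L2 : A → Lab) : Set (Set A) :=
  {B | IsIssue df B ∧ ∃ a ∈ B, a ∈ ioSet L1 L2}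
/-- dec–undec Issue-wise set `L1 ⊖_Wᵈᵘ L2`. -/
def iwDuSet (df : A → A → Prop) (L1 L2 : A → Lab) : Set (Set A) :=
  {B | IsIssue df B ∧ ∃ a ∈ B, a ∈ duSet L1 L2}
/-- IUO Issue-wise sets `L1 ⊖_Wᴹ L2` as a pair. -/
def iwIuoSets (df : A → A → Prop) (L1 L2 : A → Lab) : Set (Set A) × Set (Set A) :=
  (iwIoSet df L1 L2, iwDuSet df L1 L2)
/-- IUO Issue-wise distance `L1 |⊖_Wᴹ| L2`. -/
noncomputable def iwIuoDist (df : A → A → Prop) (L1 L2 : A → Lab) : ℕ :=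
  2 * (iwIoSet df L1 L2).ncard + (iwDuSet df L1 L2).ncard

/- Preferences: `pref Li L L'` means `L ⪰ L'` for an agent whose most preferred labeling is `Li`. -/
/-- Hamming set based preference `⪰_{i,⊖}`. -/
def hamSetPref (Li L L' : A → Lab) : Prop := hamSet L Li ⊆ hamSet L' Li
/-- Hamming distance based preference `⪰_{i,|⊖|}`. -/
def hamDistPref (Li L L' : A → Lab) : Prop := hamDist L Li ≤ hamDist L' Li
/-- IUO Hamming sets based preference `⪰_{i,⊖ᴹ}`. -/
def iuoSetPref (Li L L' : A → Lab) : Prop := PairSub (iuoSets L Li) (iuoSets L' Li)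
/-- IUO Hamming distance based preference `⪰_{i,|⊖ᴹ|}`. -/
def iuoDistPref (Li L L' : A → Lab) : Prop := iuoDist L Li ≤ iuoDist L' Li
/-- Issue-wise set based preference `⪰_{i,⊖_W}`. -/
def iwSetPref (df : A → A → Prop) (Li L L' : A → Lab) : Prop := iwSet df L Li ⊆ iwSet df L' Li
/-- Issue-wise distance based preference `⪰_{i,|⊖_W|}`. -/
def iwDistPref (df : A → A → Prop) (Li L L' : A → Lab) : Prop := iwDist df L Li ≤ iwDist df L' Li
/-- IUO Issue-wise sets based preference `⪰_{i,⊖_Wᴹ}`. -/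
def iwIuoSetPref (df : A → A → Prop) (Li L L' : A → Lab) : Prop :=
  PairSub (iwIuoSets df L Li) (iwIuoSets df L' Li)
/-- IUO Issue-wise distance based preference `⪰_{i,|⊖_Wᴹ|}`. -/
def iwIuoDistPref (df : A → A → Prop) (Li L L' : A → Lab) : Prop :=
  iwIuoDist df L Li ≤ iwIuoDist df L' Li

/-- Strict part of a preference relation. -/
def StrictPref (pref : (A → Lab) → (A → Lab) → Prop) (L L' : A → Lab) : Prop :=
  pref L L' ∧ ¬ pref L' L

/-- `L'` Pareto dominates `L` with respect to the profile of preference relations `pref`. -/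
def Dominates {ι : Type} (pref : ι → (A → Lab) → (A → Lab) → Prop) (L' L : A → Lab) : Prop :=
  (∀ i : ι, pref i L' L) ∧ ∃ j : ι, StrictPref (pref j) L' L

/-- `L` is Pareto optimal in `S`: no element of `S` Pareto dominates `L`. -/
def ParetoOptimalIn {ι : Type} (pref : ι → (A → Lab) → (A → Lab) → Prop)
    (S : Set (A → Lab)) (L : A → Lab) : Prop :=
  ∀ L' ∈ S, ¬ Dominates pref L' L

/-- `LSO` is the skeptical outcome of profile `P`: the greatest admissible labeling below the
profile. -/
def IsSkeptical {n : ℕ} (df : A → A → Prop) (P : Fin n → (A → Lab)) (LSO : A → Lab) : Prop :=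
  Admissible df LSO ∧ (∀ i : Fin n, LabLeq LSO (P i)) ∧
  ∀ L : A → Lab, Admissible df L → (∀ i : Fin n, LabLeq L (P i)) → LabLeq L LSO

/-- `LC` is the credulous initial outcome of the profile `P`. -/
def IsCio {n : ℕ} (P : Fin n → (A → Lab)) (LC : A → Lab) : Prop :=
  ∀ a : A,
    (LC a = Lab.IN ↔ (∃ i : Fin n, P i a = Lab.IN) ∧ ∀ j : Fin n, P j a ≠ Lab.OUT) ∧
    (LC a = Lab.OUT ↔ (∃ i : Fin n, P i a = Lab.OUT) ∧ ∀ j : Fin n, P j a ≠ Lab.IN)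

/-- `LCO` is the credulous outcome of `P`: the greatest admissible labeling `⊑ cio(P)`. -/
def IsCredulous {n : ℕ} (df : A → A → Prop) (P : Fin n → (A → Lab)) (LCO : A → Lab) : Prop :=
  ∃ LCIO : A → Lab, IsCio P LCIO ∧ Admissible df LCO ∧ LabLeq LCO LCIO ∧
    ∀ L : A → Lab, Admissible df L → LabLeq L LCIO → LabLeq L LCO

/-- `LSCO` is the super credulous outcome of `P` given credulous outcome `LCO`:
the least complete labeling above `LCO`. -/
def IsSuperCredulousOf (df : A → A → Prop) (LCO LSCO : A → Lab) : Prop :=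
  Complete df LSCO ∧ LabLeq LCO LSCO ∧
    ∀ L : A → Lab, Complete df L → LabLeq LCO L → LabLeq LSCO L

/-- the skeptical aggregation operator is strategy proof when individuals have
IUO Hamming sets based preferences. -/
theorem skeptical_strategyProof_iuoSets {A : Type} [Fintype A] {n : ℕ}
    (df : A → A → Prop) (P : Fin n → (A → Lab)) (hP : ∀ i : Fin n, Complete df (P i))
    (k : Fin n) (L'k : A → Lab) (LSO L'SO : A → Lab)
    (hSO : IsSkeptical df P LSO)
    (hSO' : IsSkeptical df (Function.update P k L'k) L'SO) :
    ¬ StrictPref (iuoSetPref (P k)) L'SO LSO := by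
  rintro ⟨⟨hio, hdu⟩, hnrev⟩
  simp only [iuoSets] at hio hdu
  have hleqk : LabLeq LSO (P k) := hSO.2.1 k
  -- ioSet LSO (P k) is empty
  have hioEmpty : ioSet LSO (P k) = ∅ := by
    ext a
    simp only [ioSet, Set.mem_setOf_eq, Set.mem_empty_iff_false, iff_false]
    rintro (⟨h1, h2⟩ | ⟨h1, h2⟩)
    · have := hleqk.1 h1; rw [labIn, Set.mem_setOf_eq] at this; rw [this] at h2; exact Lab.noConfusion h2
    · have := hleqk.2 h1; rw [labOut, Set.mem_setOf_eq] at this; rw [this] at h2; exact Lab.noConfusion h2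
  -- L'SO ⊑ P k
  have hleq'k : LabLeq L'SO (P k) := by
    constructor
    · intro a ha
      rw [labIn, Set.mem_setOf_eq] at ha ⊢
      rcases h : P k a with _ | _ | _
      · rfl
      · exfalso
        have : a ∈ ioSet L'SO (P k) := Or.inl ⟨ha, h⟩
        have := hio this; rw [hioEmpty] at this; exact this
      · exfalso
        have hadu : a ∈ duSet L'SO (P k) := Or.inl ⟨Or.inl ha, h⟩
        rcases hdu hadu with ⟨hd, hu⟩ | ⟨hu, hd⟩
        · rcases hd with hd | hd
          · have := hleqk.1 hd; rw [labIn, Set.mem_setOf_eq] at this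
            rw [h] at this; exact Lab.noConfusion this
          · have := hleqk.2 hd; rw [labOut, Set.mem_setOf_eq] at this
            rw [h] at this; exact Lab.noConfusion this
        · rcases hd with hd | hd
          · rw [labIn, Set.mem_setOf_eq, h] at hd; exact Lab.noConfusion hd
          · rw [labOut, Set.mem_setOf_eq, h] at hd; exact Lab.noConfusion hd
    · intro a ha
      rw [labOut, Set.mem_setOf_eq] at ha ⊢
      rcases h : P k a with _ | _ | _
      · exfalso
        have : a ∈ ioSet L'SO (P k) := Or.inr ⟨ha, h⟩
        have := hio this; rw [hioEmpty] at this; exact this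
      · rfl
      · exfalso
        have hadu : a ∈ duSet L'SO (P k) := Or.inl ⟨Or.inr ha, h⟩
        rcases hdu hadu with ⟨hd, hu⟩ | ⟨hu, hd⟩
        · rcases hd with hd | hd
          · have := hleqk.1 hd; rw [labIn, Set.mem_setOf_eq] at this
            rw [h] at this; exact Lab.noConfusion this
          · have := hleqk.2 hd; rw [labOut, Set.mem_setOf_eq] at this
            rw [h] at this; exact Lab.noConfusion this
        · rcases hd with hd | hd
          · rw [labIn, Set.mem_setOf_eq, h] at hd; exact Lab.noConfusion hd
          · rw [labOut, Set.mem_setOf_eq, h] at hd; exact Lab.noConfusion hd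
  -- L'SO ⊑ P i for all i
  have hall : ∀ i : Fin n, LabLeq L'SO (P i) := by
    intro i
    by_cases h : i = k
    · subst h; exact hleq'k
    · have := hSO'.2.1 i
      rwa [Function.update_of_ne h] at this
  -- L'SO ⊑ LSO
  have hle : LabLeq L'SO LSO := hSO.2.2 L'SO hSO'.1 hall
  -- derive the reverse preference, contradicting strictness
  apply hnrev
  simp only [iuoSetPref, PairSub, iuoSets]
  constructor
  · intro a ha
    exfalso; rw [hioEmpty] at ha; exact ha
  · intro a ha
    rcases ha with ⟨hd, hu⟩ | ⟨hu, hd⟩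
    · exfalso
      rcases hd with hd | hd
      · have := hleqk.1 hd; rw [labIn, Set.mem_setOf_eq, hu] at this; exact Lab.noConfusion this
      · have := hleqk.2 hd; rw [labOut, Set.mem_setOf_eq, hu] at this; exact Lab.noConfusion this
    · refine Or.inr ⟨?_, hd⟩
      rcases h : L'SO a with _ | _ | _
      · exfalso
        have := hle.1 h; rw [labIn, Set.mem_setOf_eq, hu] at this; exact Lab.noConfusion this
      · exfalso
        have := hle.2 h; rw [labOut, Set.mem_setOf_eq, hu] at this; exact Lab.noConfusion this
      · rfl
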